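/- The integer translates of the sinc function are orthonormal in L²(ℝ): for all integers m, n, the function x ↦ sinc(x − m)·sinc(x − n) is integrable over ℝ and ∫_ℝ sinc(x − m)·sinc(x − n) dx equals 1 if m = n and 0 otherwise. -/

import Mathlib

/-!
The function `x ↦ sinc (x - a)` is the Fourier transform of the modulated boxcar
`x ↦ e^{2πiax} 1_{[-1/2, 1/2]}(x)`, an `L¹ ∩ L²` function. Plancherel therefore turns
`∫ sinc (x - a) sinc (x - b) dx` into `∫_{-1/2}^{1/2} e^{-2πi(a-b)x} dx = sinc (a - b)`, and `sinc`
vanishes at the nonzero integers.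
-/

open MeasureTheory

/-- The sinc function: `sinc 0 = 1`, `sinc t = sin (π t) / (π t)` otherwise. -/
noncomputable def sinc (t : ℝ) : ℝ :=
  if t = 0 then 1 else Real.sin (Real.pi * t) / (Real.pi * t)

open FourierTransform
open scoped Real InnerProductSpace

theorem MeasureTheory.MemLp.inner_toLp_toLp {α 𝕜 E : Type*} [MeasurableSpace α] {μ : Measure α}
    [RCLike 𝕜] [NormedAddCommGroup E] [InnerProductSpace 𝕜 E] {f g : α → E}
    (hf : MemLp f 2 μ) (hg : MemLp g 2 μ) :
    ⟪hf.toLp f, hg.toLp g⟫_𝕜 = ∫ x, ⟪f x, g x⟫_𝕜 ∂μ := by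
  rw [L2.inner_def]
  exact integral_congr_ae <| by
    filter_upwards [hf.coeFn_toLp, hg.coeFn_toLp] with x hfx hgx
    rw [hfx, hgx]

section Plancherel

variable {V F : Type*} [NormedAddCommGroup V] [InnerProductSpace ℝ V] [FiniteDimensional ℝ V]
  [MeasurableSpace V] [BorelSpace V]
  [NormedAddCommGroup F] [InnerProductSpace ℂ F] [CompleteSpace F]

theorem MeasureTheory.MemLp.fourier_toLp {f : V → F} (hf₂ : MemLp f 2) (hf : Integrable f)
    (hFf₂ : MemLp (𝓕 f) 2) : 𝓕 (hf₂.toLp f) = hFf₂.toLp (𝓕 f) := by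
  apply LinearMap.ker_eq_bot.mp
    (Lp.ker_toTemperedDistributionCLM_eq_bot (F := F) (μ := volume) (p := 2))
  ext g
  simp only [ContinuousLinearMap.coe_coe, Lp.toTemperedDistributionCLM_apply]
  rw [← Lp.fourier_toTemperedDistribution_eq, TemperedDistribution.fourier_apply,
    Lp.toTemperedDistribution_apply, Lp.toTemperedDistribution_apply]
  calc ∫ x, 𝓕 g x • hf₂.toLp f x = ∫ x, 𝓕 g x • f x :=
        integral_congr_ae (by filter_upwards [hf₂.coeFn_toLp] with x hx; rw [hx])
    _ = ∫ x, g x • 𝓕 f x := by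
        simpa using! VectorFourier.integral_fourierIntegral_smul_eq_flip (L := innerₗ V)
          Real.continuous_fourierChar continuous_inner g.integrable hf
    _ = ∫ x, g x • hFf₂.toLp (𝓕 f) x :=
        integral_congr_ae (by filter_upwards [hFf₂.coeFn_toLp] with x hx; rw [hx])

theorem integral_inner_fourier_fourier {f g : V → F} (hf : Integrable f) (hf₂ : MemLp f 2)
    (hFf₂ : MemLp (𝓕 f) 2) (hg : Integrable g) (hg₂ : MemLp g 2) (hFg₂ : MemLp (𝓕 g) 2) :
    ∫ x, ⟪𝓕 f x, 𝓕 g x⟫_ℂ = ∫ x, ⟪f x, g x⟫_ℂ := by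
  rw [← hFf₂.inner_toLp_toLp hFg₂, ← hf₂.fourier_toLp hf, ← hg₂.fourier_toLp hg,
    Lp.inner_fourier_eq, hf₂.inner_toLp_toLp hg₂]

end Plancherel

theorem Real.sinc_sq_le (x : ℝ) : Real.sinc x ^ 2 ≤ 2 / (1 + x ^ 2) := by
  rw [le_div_iff₀ (by positivity)]
  rcases le_or_gt (x ^ 2) 1 with hx | hx
  · nlinarith [sq_le_one_iff_abs_le_one (Real.sinc x) |>.mpr (Real.abs_sinc_le_one x)]
  · have hx0 : x ≠ 0 := by rintro rfl; norm_num at hx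
    rw [Real.sinc_of_ne_zero hx0, div_pow, div_mul_eq_mul_div, div_le_iff₀ (by positivity)]
    nlinarith [Real.sin_sq_le_one x]

theorem sinc_eq_real_sinc (t : ℝ) : sinc t = Real.sinc (π * t) := by
  by_cases ht : t = 0 <;> simp [sinc, Real.sinc, ht, Real.pi_ne_zero]

theorem continuous_sinc : Continuous sinc := by
  rw [funext sinc_eq_real_sinc]
  fun_prop

theorem sinc_intCast (k : ℤ) : sinc k = if k = 0 then 1 else 0 := by
  split_ifs with hk
  · simp [sinc, hk]
  · simp [sinc, hk, mul_comm π, Real.sin_int_mul_pi]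

theorem sinc_sq_le (t : ℝ) : sinc t ^ 2 ≤ 2 / (1 + t ^ 2) := by
  rw [sinc_eq_real_sinc]
  refine (Real.sinc_sq_le _).trans (div_le_div_of_nonneg_left zero_le_two (by positivity) ?_)
  have hπ : 1 ≤ π ^ 2 := by nlinarith [Real.pi_gt_three]
  rw [mul_pow]
  nlinarith [mul_le_mul_of_nonneg_right hπ (sq_nonneg t)]

theorem memLp_two_sinc_comp_sub (a : ℝ) : MemLp (fun x => sinc (x - a)) 2 := by
  have hmeas : AEStronglyMeasurable (fun x => sinc (x - a)) :=
    (continuous_sinc.comp (continuous_sub_right a)).aestronglyMeasurable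
  refine (memLp_two_iff_integrable_sq hmeas).mpr <|
    ((integrable_inv_one_add_sq.comp_sub_right a).const_mul 2).mono' (hmeas.pow 2) ?_
  refine Filter.Eventually.of_forall fun x => ?_
  simpa [← div_eq_mul_inv] using sinc_sq_le (x - a)

noncomputable def boxcar : ℝ → ℂ := (Set.Icc (-1 / 2 : ℝ) (1 / 2)).indicator 1

noncomputable def modulatedBoxcar (a x : ℝ) : ℂ := 𝐞 (a * x) • boxcar x

theorem memLp_boxcar (p : ENNReal) : MemLp boxcar p :=
  memLp_indicator_const p measurableSet_Icc 1 (Or.inr measure_Icc_lt_top.ne)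

theorem memLp_modulatedBoxcar (a : ℝ) (p : ENNReal) : MemLp (modulatedBoxcar a) p := by
  refine (memLp_boxcar p).of_le
    ((Real.continuous_fourierChar.comp (continuous_const_mul a)).aestronglyMeasurable.smul
      (memLp_boxcar p).1) (Filter.Eventually.of_forall fun x => ?_)
  simp [modulatedBoxcar, Circle.smul_def, Circle.norm_coe]

theorem integrable_modulatedBoxcar (a : ℝ) : Integrable (modulatedBoxcar a) :=
  memLp_one_iff_integrable.mp (memLp_modulatedBoxcar a 1)

theorem fourier_boxcar (s : ℝ) : 𝓕 boxcar s = sinc s := by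
  calc 𝓕 boxcar s = ∫ v in (-1 / 2 : ℝ)..1 / 2, Complex.exp (-2 * π * s * Complex.I * v) := by
        rw [Real.fourier_real_eq_integral_exp_smul, intervalIntegral.integral_of_le (by norm_num),
          ← integral_Icc_eq_integral_Ioc, ← integral_indicator measurableSet_Icc]
        congr 1 with v
        simp only [boxcar, Set.indicator_apply]
        split_ifs
        · push_cast
          ring_nf
          simp
        · simp
    _ = sinc s := by
        rcases eq_or_ne s 0 with rfl | hs
        · norm_num [sinc]
        rw [integral_exp_mul_complex (by simp [hs, Real.pi_ne_zero, Complex.I_ne_zero]), sinc,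
          if_neg hs]
        push_cast
        rw [Complex.sin]
        field_simp
        linear_combination (Complex.exp (π * s * Complex.I) - Complex.exp (-(π * s * Complex.I))) *
          (s : ℂ)⁻¹ * Complex.I_sq

theorem fourier_modulatedBoxcar (a : ℝ) :
    𝓕 (modulatedBoxcar a) = fun ξ => (sinc (ξ - a) : ℂ) := by
  ext ξ
  rw [← fourier_boxcar, Real.fourier_real_eq, Real.fourier_real_eq]
  congr 1 with x
  rw [modulatedBoxcar, smul_smul, ← AddChar.map_add_eq_mul]
  ring_nf

theorem inner_modulatedBoxcar (a b x : ℝ) :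
    ⟪modulatedBoxcar a x, modulatedBoxcar b x⟫_ℂ = 𝐞 (-(x * (a - b))) • boxcar x := by
  simp only [modulatedBoxcar, boxcar, Set.indicator_apply]
  split_ifs
  · simp only [Pi.one_apply, Circle.smul_def, smul_eq_mul, mul_one, RCLike.inner_apply,
      ← Circle.coe_inv_eq_conj, ← AddChar.map_neg_eq_inv, ← Circle.coe_mul,
      ← AddChar.map_add_eq_mul]
    ring_nf
  · simp

theorem integral_inner_modulatedBoxcar (a b : ℝ) :
    ∫ x, ⟪modulatedBoxcar a x, modulatedBoxcar b x⟫_ℂ = sinc (a - b) := by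
  simp only [inner_modulatedBoxcar, ← fourier_boxcar, Real.fourier_real_eq]

theorem integral_sinc_sub_mul_sinc_sub (a b : ℝ) :
    ∫ x, sinc (x - a) * sinc (x - b) = sinc (a - b) := by
  have hFL2 (c : ℝ) : MemLp (𝓕 (modulatedBoxcar c)) 2 := by
    rw [fourier_modulatedBoxcar]
    exact (memLp_two_sinc_comp_sub c).ofReal
  have h := integral_inner_fourier_fourier (integrable_modulatedBoxcar a)
    (memLp_modulatedBoxcar a 2) (hFL2 a) (integrable_modulatedBoxcar b)
    (memLp_modulatedBoxcar b 2) (hFL2 b)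
  rw [integral_inner_modulatedBoxcar, fourier_modulatedBoxcar, fourier_modulatedBoxcar] at h
  simp only [RCLike.inner_apply, Complex.conj_ofReal, ← Complex.ofReal_mul] at h
  rw [integral_complex_ofReal, Complex.ofReal_inj] at h
  simpa only [mul_comm] using h

theorem sinc_translates_orthonormal (m n : ℤ) :
    Integrable (fun x : ℝ => sinc (x - m) * sinc (x - n)) ∧
      (∫ x : ℝ, sinc (x - m) * sinc (x - n)) = if m = n then 1 else 0 := by
  refine ⟨(memLp_two_sinc_comp_sub m).integrable_mul (memLp_two_sinc_comp_sub n), ?_⟩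
  rw [integral_sinc_sub_mul_sinc_sub, ← Int.cast_sub, sinc_intCast]
  simp only [sub_eq_zero]
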